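/- For any p ≥ 1 and any complex numbers z, z', one has the integral identity |z|^{2p} z − |z'|^{2p} z' = (p+1)(∫₀¹ |Z_λ|^{2p} dλ)(z − z') + p(∫₀¹ |Z_λ|^{2(p−1)} Z_λ² dλ) · conj(z − z'), where Z_λ := λz + (1−λ)z'. -/

import Mathlib

/-!
Along the segment `Z l = l • z + (1 - l) • z'`, the map `l ↦ |Z l|^{2p} Z l = Z^{p+1} conj(Z)^p`
has derivative `(p+1)|Z|^{2p} (z - z') + p |Z|^{2(p-1)} Z² conj(z - z')` by the product
rule (the second term vanishes for `p = 0`, so the truncation of `p - 1` is harmless), and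
the identity is the fundamental theorem of calculus on `[0, 1]`.
-/

open ComplexConjugate

lemma Complex.ofReal_norm_pow_two_mul_eq_pow_mul_conj_pow (w : ℂ) (n : ℕ) :
    ((‖w‖ ^ (2 * n) : ℝ) : ℂ) = w ^ n * conj w ^ n := by
  rw [← mul_pow, Complex.mul_conj', pow_mul]
  push_cast
  rfl

lemma HasDerivAt.ofReal_norm_pow_two_mul_mul_self {f : ℝ → ℂ} {f' : ℂ} {t : ℝ}
    (hf : HasDerivAt f f' t) (n : ℕ) :
    HasDerivAt (fun s => ((‖f s‖ ^ (2 * n) : ℝ) : ℂ) * f s)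
      (((n : ℂ) + 1) * ((‖f t‖ ^ (2 * n) : ℝ) : ℂ) * f'
        + n * (((‖f t‖ ^ (2 * (n - 1)) : ℝ) : ℂ) * f t ^ 2) * conj f') t := by
  have hpoly : (fun s => ((‖f s‖ ^ (2 * n) : ℝ) : ℂ) * f s)
      = fun s => f s ^ (n + 1) * conj (f s) ^ n := by
    ext s
    rw [Complex.ofReal_norm_pow_two_mul_eq_pow_mul_conj_pow]
    ring
  have hconj : HasDerivAt (fun s => conj (f s)) (conj f') t := hf.star
  rw [hpoly]
  refine ((hf.fun_pow (n + 1)).fun_mul (hconj.fun_pow n)).congr_deriv ?_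
  simp only [Complex.ofReal_norm_pow_two_mul_eq_pow_mul_conj_pow]
  rcases n with _ | n
  · simp
  · push_cast
    ring

lemma hasDerivAt_smul_add_one_sub_smul {E : Type*} [NormedAddCommGroup E] [NormedSpace ℝ E]
    (z z' : E) (t : ℝ) :
    HasDerivAt (fun s : ℝ => s • z + (1 - s) • z') (z - z') t := by
  have h := ((hasDerivAt_id t).smul_const z).fun_add
    (((hasDerivAt_id t).const_sub 1).smul_const z')
  simpa [sub_eq_add_neg] using h

theorem stmt_4_general (p : ℕ) (z z' : ℂ) :
    ((‖z‖ ^ (2 * p) : ℝ) : ℂ) * z - ((‖z'‖ ^ (2 * p) : ℝ) : ℂ) * z' =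
      ((p : ℂ) + 1) *
        ((↑(∫ l in (0:ℝ)..1, ‖l • z + (1 - l) • z'‖ ^ (2 * p)) : ℂ)) * (z - z')
      + (p : ℂ) *
        (∫ l in (0:ℝ)..1,
          ((‖l • z + (1 - l) • z'‖ ^ (2 * (p - 1)) : ℝ) : ℂ) *
            (l • z + (1 - l) • z') ^ 2) *
        (starRingEnd ℂ) (z - z') := by
  have hderiv := fun l =>
    (hasDerivAt_smul_add_one_sub_smul z z' l).ofReal_norm_pow_two_mul_mul_self p
  have hFTC := intervalIntegral.integral_eq_sub_of_hasDerivAt (fun l _ => hderiv l)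
    (Continuous.intervalIntegrable (by fun_prop) 0 1)
  rw [intervalIntegral.integral_add (Continuous.intervalIntegrable (by fun_prop) 0 1)
      (Continuous.intervalIntegrable (by fun_prop) 0 1),
    intervalIntegral.integral_mul_const, intervalIntegral.integral_mul_const,
    intervalIntegral.integral_const_mul, intervalIntegral.integral_const_mul,
    intervalIntegral.integral_ofReal] at hFTC
  simpa using hFTC.symm

/-- Integral identity: for `p ≥ 1` and `z, z' ∈ ℂ`, with `Z_λ = λz + (1−λ)z'`,
`|z|^{2p} z − |z'|^{2p} z' = (p+1)(∫₀¹ |Z_λ|^{2p} dλ)(z − z')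
  + p(∫₀¹ |Z_λ|^{2(p−1)} Z_λ² dλ) conj(z − z')`. -/
theorem stmt_4 (p : ℕ) (hp : 1 ≤ p) (z z' : ℂ) :
    ((‖z‖ ^ (2 * p) : ℝ) : ℂ) * z - ((‖z'‖ ^ (2 * p) : ℝ) : ℂ) * z' =
      ((p : ℂ) + 1) *
        ((↑(∫ l in (0:ℝ)..1, ‖l • z + (1 - l) • z'‖ ^ (2 * p)) : ℂ)) * (z - z')
      + (p : ℂ) *
        (∫ l in (0:ℝ)..1,
          ((‖l • z + (1 - l) • z'‖ ^ (2 * (p - 1)) : ℝ) : ℂ) *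
            (l • z + (1 - l) • z') ^ 2) *
        (starRingEnd ℂ) (z - z') :=
  stmt_4_general p z z'
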